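/- The quartic norm q is invariant under the SLOCC-equivalence group: for all g₁, g₂, g₃ ∈ SL(2,ℂ) and every 3-qubit state a, q((g₁,g₂,g₃)·a) = q(a). -/
import Mathlib


/-- A 3-qubit state: a map `Fin 2 → Fin 2 → Fin 2 → ℂ` with components `a i j k`. -/
abbrev QState3 : Type := Fin 2 → Fin 2 → Fin 2 → ℂ

/-- The action of the SLOCC-equivalence group `SL(2,ℂ)×SL(2,ℂ)×SL(2,ℂ)` on 3-qubit states:
`((g₁,g₂,g₃)·a)_{ijk} = Σ (g₁)_{ii'} (g₂)_{jj'} (g₃)_{kk'} a_{i'j'k'}`. -/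
noncomputable def sloccAct (g₁ g₂ g₃ : Matrix.SpecialLinearGroup (Fin 2) ℂ) (a : QState3) : QState3 :=
  fun i j k => ∑ i' : Fin 2, ∑ j' : Fin 2, ∑ k' : Fin 2,
    (g₁ : Matrix (Fin 2) (Fin 2) ℂ) i i' * (g₂ : Matrix (Fin 2) (Fin 2) ℂ) j j' *
      (g₃ : Matrix (Fin 2) (Fin 2) ℂ) k k' * a i' j' k'

/-- The quartic norm `q` of a 3-qubit state (Cayley's hyperdeterminant up to scale). -/
def quarticQ3 (a : QState3) : ℂ :=
  -2 * (a 1 1 1 * a 0 0 0 -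
      (a 0 0 1 * a 1 1 0 + a 0 1 0 * a 1 0 1 + a 1 0 0 * a 0 1 1)) ^ 2 -
    8 * (a 1 1 1 * a 0 0 1 * a 0 1 0 * a 1 0 0 + a 0 0 0 * a 1 1 0 * a 1 0 1 * a 0 1 1 -
      (a 0 1 0 * a 1 0 0 * a 1 0 1 * a 0 1 1 + a 0 0 1 * a 1 0 0 * a 1 1 0 * a 0 1 1 +
        a 0 0 1 * a 0 1 0 * a 1 1 0 * a 1 0 1))

/-- The symplectic (antisymmetric bilinear) form of two 3-qubit states. -/
def symplQ3 (a b : QState3) : ℂ :=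
  a 1 1 1 * b 0 0 0 - a 0 0 0 * b 1 1 1 +
    (a 0 0 1 * b 1 1 0 + a 0 1 0 * b 1 0 1 + a 1 0 0 * b 0 1 1) -
    (a 1 1 0 * b 0 0 1 + a 1 0 1 * b 0 1 0 + a 0 1 1 * b 1 0 0)

/-- Transform acting on the first index. -/
def T1 (p q r s : ℂ) (a : QState3) : QState3 :=
  fun i j k => if i = 0 then p * a 0 j k + q * a 1 j k else r * a 0 j k + s * a 1 j k

/-- Transform acting on the second index. -/
def T2 (p q r s : ℂ) (a : QState3) : QState3 :=
  fun i j k => if j = 0 then p * a i 0 k + q * a i 1 k else r * a i 0 k + s * a i 1 k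

/-- Transform acting on the third index. -/
def T3 (p q r s : ℂ) (a : QState3) : QState3 :=
  fun i j k => if k = 0 then p * a i j 0 + q * a i j 1 else r * a i j 0 + s * a i j 1

lemma qT1 (p q r s : ℂ) (a : QState3) :
    quarticQ3 (T1 p q r s a) = (p * s - q * r) ^ 2 * quarticQ3 a := by
  simp only [quarticQ3, T1]; norm_num; ring

lemma qT2 (p q r s : ℂ) (a : QState3) :
    quarticQ3 (T2 p q r s a) = (p * s - q * r) ^ 2 * quarticQ3 a := by
  simp only [quarticQ3, T2]; norm_num; ring

lemma qT3 (p q r s : ℂ) (a : QState3) :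
    quarticQ3 (T3 p q r s a) = (p * s - q * r) ^ 2 * quarticQ3 a := by
  simp only [quarticQ3, T3]; norm_num; ring

lemma slocc_decomp (g₁ g₂ g₃ : Matrix.SpecialLinearGroup (Fin 2) ℂ) (a : QState3) :
    sloccAct g₁ g₂ g₃ a =
      T1 (g₁.1 0 0) (g₁.1 0 1) (g₁.1 1 0) (g₁.1 1 1)
        (T2 (g₂.1 0 0) (g₂.1 0 1) (g₂.1 1 0) (g₂.1 1 1)
          (T3 (g₃.1 0 0) (g₃.1 0 1) (g₃.1 1 0) (g₃.1 1 1) a)) := by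
  funext i j k
  simp only [sloccAct, Fin.sum_univ_two, T1, T2, T3]
  fin_cases i <;> fin_cases j <;> fin_cases k <;> norm_num <;> ring

lemma det_one (g : Matrix.SpecialLinearGroup (Fin 2) ℂ) :
    g.1 0 0 * g.1 1 1 - g.1 0 1 * g.1 1 0 = 1 := by
  have := g.2
  rwa [Matrix.det_fin_two] at this

/-- The quartic norm is invariant under the SLOCC-equivalence group. -/
theorem quartic_slocc_invariant :
    ∀ (g₁ g₂ g₃ : Matrix.SpecialLinearGroup (Fin 2) ℂ) (a : QState3),
      quarticQ3 (sloccAct g₁ g₂ g₃ a) = quarticQ3 a := by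
  intro g₁ g₂ g₃ a
  rw [slocc_decomp, qT1, qT2, qT3, det_one, det_one, det_one]
  ring
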